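/- Let ψ1 and ψ2 be balanced (h-1)-spreads of PG(u-1,2), let π be the (t0-1)-flat spanned by the last t0 standard basis vectors of GF(2)^{u+t0}, and let Ω_j = ψ_j × π be the corresponding covering stars St(u+t0, μ, h+t0, t0) (each ray of Ω_j is the span of a flat of ψ_j, embedded in the first u coordinates, together with π). Then Ω1 and Ω2 are isomorphic (equal after applying some element of GL(u+t0, 2)) if and only if ψ1 and ψ2 are isomorphic (equal after applying some element of GL(u,2)). -/

import Mathlib

/-- The vector space `GF(2)^n`. -/
abbrev V (n : ℕ) := Fin n → ZMod 2

/-- A `(t-1)`-flat of `PG(n-1,2)`: the set of nonzero points of a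
`t`-dimensional `GF(2)`-subspace of `GF(2)^n`. -/
def IsFlat (n t : ℕ) (f : Set (V n)) : Prop :=
  ∃ S : Submodule (ZMod 2) (V n),
    Module.finrank (ZMod 2) S = t ∧ f = (S : Set (V n)) \ {0}

/-- A balanced `(t-1)`-spread of `PG(n-1,2)`: a collection of `(t-1)`-flats
whose underlying point sets partition the nonzero vectors of `GF(2)^n`. -/
def IsSpread (n t : ℕ) (ψ : Set (Set (V n))) : Prop :=
  (∀ f ∈ ψ, IsFlat n t f) ∧ ψ.PairwiseDisjoint id ∧
    ⋃₀ ψ = {v : V n | v ≠ 0}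

/-- The embedding of `GF(2)^u` into `GF(2)^(u+t0)` via the first `u`
coordinates. -/
def emb (u n : ℕ) : V u →ₗ[ZMod 2] V n where
  toFun v := fun j => if h : (j : ℕ) < u then v ⟨j, h⟩ else 0
  map_add' x y := by funext j; by_cases h : (j : ℕ) < u <;> simp [h]
  map_smul' c x := by funext j; by_cases h : (j : ℕ) < u <;> simp [h]

/-- The `(t0-1)`-flat `π` spanned by the last `t0` standard basis vectors of
`GF(2)^(u+t0)`: the nonzero vectors supported on the last `t0` coordinates. -/
def nucleus (u t0 : ℕ) : Set (V (u + t0)) :=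
  {v | v ≠ 0 ∧ ∀ j : Fin (u + t0), (j : ℕ) < u → v j = 0}

/-- The covering star `Ω = ψ × π` associated to a spread `ψ` of `PG(u-1,2)`:
its rays are `span(f ∪ π) \ {0}` for the flats `f` of `ψ` embedded in the
first `u` coordinates of `GF(2)^(u+t0)`. -/
def starOf (u t0 : ℕ) (ψ : Set (Set (V u))) : Set (Set (V (u + t0))) :=
  (fun f => (Submodule.span (ZMod 2)
      (emb u (u + t0) '' f ∪ nucleus u t0) : Set (V (u + t0))) \ {0}) '' ψ


/-!
Every ray of `ψ × π` is `p⁻¹(span f) \ {0}` for a flat `f` of `ψ`, where `p` is the projection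
onto the first `u` coordinates and `π = ker p \ {0}`. Hence any `C` with `p ∘ C = D ∘ p`, such as
the block diagonal map `D ⊕ 1`, sends `ψ × π` to `D(ψ) × π`, which gives one direction.
Conversely, distinct flats of a spread span subspaces meeting in `0`, so as soon as `ψ` has two
flats, `π` is the intersection of all rays of `ψ × π`. An isomorphism `C` of stars then preserves
`ker p` and descends to some `D ∈ GL(u, 2)` with `p ∘ C = D ∘ p`, and `D` maps `ψ1` onto `ψ2`
because a star determines its spread. A spread with at most one flat is `∅` or `{PG(u-1,2)}`,
and these two are told apart by whether the star is empty.
-/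

open Submodule LinearMap

theorem Set.image_sInter_of_bijective {α β : Type*} {g : α → β} (hg : g.Bijective)
    (S : Set (Set α)) : g '' ⋂₀ S = ⋂₀ ((g '' ·) '' S) := by
  rw [Set.sInter_image, Set.sInter_eq_biInter, Set.image_iInter₂ hg]

section Punctured

variable {R M N : Type*} [Ring R] [AddCommGroup M] [Module R M] [AddCommGroup N] [Module R N]

/-- The nonzero vectors of a subspace: for `R = GF(2)` these are the points of the
corresponding flat of the projective space. -/
def punctured (S : Submodule R M) : Set M := (S : Set M) \ {0}

theorem span_punctured (S : Submodule R M) : span R (punctured S) = S := by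
  rw [punctured, span_sdiff_singleton_zero, span_eq]

theorem punctured_injective : Function.Injective (punctured : Submodule R M → Set M) :=
  fun S T hST => by rw [← span_punctured S, hST, span_punctured]

theorem punctured_mono {S T : Submodule R M} (hST : S ≤ T) : punctured S ⊆ punctured T :=
  Set.sdiff_subset_sdiff_left hST

theorem punctured_inf (S T : Submodule R M) :
    punctured (S ⊓ T) = punctured S ∩ punctured T := by
  ext x
  simp [punctured, and_assoc, and_comm, and_left_comm]

theorem image_punctured (e : M ≃ₗ[R] N) (S : Submodule R M) :
    e '' punctured S = punctured (S.map (e : M →ₗ[R] N)) := by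
  rw [punctured, punctured, Set.image_sdiff e.injective, Set.image_singleton, map_zero,
    map_coe, LinearEquiv.coe_coe]

end Punctured

section Intertwining

variable {R M N P : Type*} [Ring R] [AddCommGroup M] [Module R M] [AddCommGroup N] [Module R N]
  [AddCommGroup P] [Module R P]

theorem map_sup_ker_eq_comap {p : M →ₗ[R] N} {s : N →ₗ[R] M} (hs : ∀ x, p (s x) = x)
    (S : Submodule R N) : S.map s ⊔ ker p = S.comap p := by
  rw [← comap_map_eq, ← map_comp, show p ∘ₗ s = LinearMap.id from LinearMap.ext hs, map_id]

theorem map_comap_eq_comap_map {p : M →ₗ[R] N} {C : M ≃ₗ[R] M} {D : N ≃ₗ[R] N}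
    (hCD : ∀ w, p (C w) = D (p w)) (S : Submodule R N) :
    (S.comap p).map (C : M →ₗ[R] M) = (S.map (D : N →ₗ[R] N)).comap p := by
  ext w
  rw [map_equiv_eq_comap_symm, map_equiv_eq_comap_symm, mem_comap, mem_comap, mem_comap]
  have : p (C.symm w) = D.symm (p w) := by
    rw [← D.symm_apply_apply (p (C.symm w)), ← hCD, C.apply_symm_apply]
  simp only [LinearEquiv.coe_coe, this, mem_comap]

theorem exists_intertwining_of_map_ker {p : M →ₗ[R] N} (hp : Function.Surjective p)
    (C : M ≃ₗ[R] M) (hC : (ker p).map (C : M →ₗ[R] M) = ker p) :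
    ∃ D : N ≃ₗ[R] N, ∀ w, p (C w) = D (p w) := by
  let e := p.quotKerEquivOfSurjective hp
  refine ⟨(e.symm.trans (Quotient.equiv _ _ C hC)).trans e, fun w => ?_⟩
  have hw : e.symm (p w) = Submodule.Quotient.mk w := by
    rw [LinearEquiv.symm_apply_eq, quotKerEquivOfSurjective_apply_mk]
  simp [hw, e]

theorem exists_intertwining_fst (e : M ≃ₗ[R] N × P) (D : N ≃ₗ[R] N) :
    ∃ C : M ≃ₗ[R] M, ∀ w, (e (C w)).1 = D (e w).1 :=
  ⟨(e.trans (D.prodCongr (LinearEquiv.refl R P))).trans e.symm, fun w => by simp⟩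

end Intertwining

def splitCoords (u t0 : ℕ) : V (u + t0) ≃ₗ[ZMod 2] V u × V t0 :=
  (LinearEquiv.funCongrLeft _ _ finSumFinEquiv).trans (LinearEquiv.sumArrowLequivProdArrow _ _ _ _)

def projFirst (u t0 : ℕ) : V (u + t0) →ₗ[ZMod 2] V u :=
  LinearMap.fst _ _ _ ∘ₗ (splitCoords u t0 : V (u + t0) →ₗ[ZMod 2] V u × V t0)

theorem projFirst_apply (u t0 : ℕ) (v : V (u + t0)) (i : Fin u) :
    projFirst u t0 v i = v (Fin.castAdd t0 i) := rfl

theorem projFirst_emb (u t0 : ℕ) (x : V u) : projFirst u t0 (emb u (u + t0) x) = x := by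
  funext i
  simp [projFirst_apply, emb]

theorem projFirst_surjective (u t0 : ℕ) : Function.Surjective (projFirst u t0) :=
  fun x => ⟨_, projFirst_emb u t0 x⟩

theorem mem_ker_projFirst {u t0 : ℕ} {v : V (u + t0)} :
    v ∈ ker (projFirst u t0) ↔ ∀ j : Fin (u + t0), (j : ℕ) < u → v j = 0 := by
  rw [mem_ker, funext_iff]
  refine ⟨fun hv j hj => hv ⟨j, hj⟩, fun hv i => hv _ i.isLt⟩

theorem nucleus_eq_punctured_ker (u t0 : ℕ) :
    nucleus u t0 = punctured (ker (projFirst u t0)) := by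
  ext v
  simp only [nucleus, punctured, Set.mem_ofPred_eq, Set.mem_sdiff, SetLike.mem_coe,
    mem_ker_projFirst, Set.mem_singleton_iff]
  tauto

def ray (u t0 : ℕ) (f : Set (V u)) : Set (V (u + t0)) :=
  punctured ((span (ZMod 2) f).comap (projFirst u t0))

theorem starOf_eq_image_ray (u t0 : ℕ) (ψ : Set (Set (V u))) :
    starOf u t0 ψ = ray u t0 '' ψ := by
  refine Set.image_congr fun f _ => ?_
  rw [ray, punctured, span_union, span_image, nucleus_eq_punctured_ker, span_punctured,
    map_sup_ker_eq_comap (projFirst_emb u t0)]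

theorem image_ray {u t0 : ℕ} {C : V (u + t0) ≃ₗ[ZMod 2] V (u + t0)} {D : V u ≃ₗ[ZMod 2] V u}
    (hCD : ∀ w, projFirst u t0 (C w) = D (projFirst u t0 w)) (f : Set (V u)) :
    C '' ray u t0 f = ray u t0 (D '' f) := by
  rw [ray, ray, image_punctured, map_comap_eq_comap_map hCD, span_image_linearEquiv]

theorem image_starOf {u t0 : ℕ} {C : V (u + t0) ≃ₗ[ZMod 2] V (u + t0)} {D : V u ≃ₗ[ZMod 2] V u}
    (hCD : ∀ w, projFirst u t0 (C w) = D (projFirst u t0 w)) (ψ : Set (Set (V u))) :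
    (C '' ·) '' starOf u t0 ψ = starOf u t0 ((D '' ·) '' ψ) := by
  simp only [starOf_eq_image_ray, Set.image_image, image_ray hCD]

theorem IsFlat.eq_punctured_span {n t : ℕ} {f : Set (V n)} (hf : IsFlat n t f) :
    f = punctured (span (ZMod 2) f) := by
  obtain ⟨S, -, rfl⟩ := hf
  exact congrArg punctured (span_punctured S).symm

theorem IsFlat.image {n t : ℕ} {f : Set (V n)} (hf : IsFlat n t f) (D : V n ≃ₗ[ZMod 2] V n) :
    IsFlat n t (D '' f) := by
  obtain ⟨S, hS, rfl⟩ := hf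
  exact ⟨S.map (D : V n →ₗ[ZMod 2] V n), by rw [LinearEquiv.finrank_map_eq, hS],
    image_punctured D S⟩

theorem ray_injOn (u t0 h : ℕ) : Set.InjOn (ray u t0) {f | IsFlat u h f} := by
  intro f hf g hg hfg
  rw [hf.eq_punctured_span, hg.eq_punctured_span,
    comap_injective_of_surjective (projFirst_surjective u t0) (punctured_injective hfg)]

theorem IsSpread.span_inf_span {n t : ℕ} {ψ : Set (Set (V n))} (hψ : IsSpread n t ψ)
    {f g : Set (V n)} (hf : f ∈ ψ) (hg : g ∈ ψ) (hfg : f ≠ g) :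
    span (ZMod 2) f ⊓ span (ZMod 2) g = ⊥ := by
  refine (Submodule.eq_bot_iff _).2 fun x hx => by_contra fun hx0 => ?_
  have hx' : x ∈ punctured (span (ZMod 2) f) ∩ punctured (span (ZMod 2) g) := by
    rw [← punctured_inf]
    exact ⟨hx, hx0⟩
  rw [← (hψ.1 f hf).eq_punctured_span, ← (hψ.1 g hg).eq_punctured_span] at hx'
  exact Set.disjoint_left.mp (hψ.2.1 hf hg hfg) hx'.1 hx'.2

theorem IsSpread.sInter_starOf {u t0 h : ℕ} {ψ : Set (Set (V u))} (hψ : IsSpread u h ψ)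
    (hnt : ψ.Nontrivial) : ⋂₀ starOf u t0 ψ = punctured (ker (projFirst u t0)) := by
  obtain ⟨f, hf, g, hg, hfg⟩ := hnt
  refine subset_antisymm (fun x hx => ?_) (Set.subset_sInter ?_)
  · have hray : ray u t0 f ∩ ray u t0 g = punctured (ker (projFirst u t0)) := by
      rw [ray, ray, ← punctured_inf, ← comap_inf, hψ.span_inf_span hf hg hfg, comap_bot]
    rw [starOf_eq_image_ray] at hx
    exact hray ▸ ⟨hx _ ⟨f, hf, rfl⟩, hx _ ⟨g, hg, rfl⟩⟩
  · rw [starOf_eq_image_ray]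
    rintro _ ⟨k, -, rfl⟩
    exact punctured_mono (comap_mono bot_le)

theorem starOf_nonempty_iff {u t0 : ℕ} {ψ : Set (Set (V u))} :
    (starOf u t0 ψ).Nonempty ↔ ψ.Nonempty :=
  Set.image_nonempty

theorem starOf_nontrivial_iff {u t0 h : ℕ} {ψ : Set (Set (V u))} (hψ : ∀ f ∈ ψ, IsFlat u h f) :
    (starOf u t0 ψ).Nontrivial ↔ ψ.Nontrivial := by
  rw [starOf_eq_image_ray]
  exact ((ray_injOn u t0 h).mono hψ).image_nontrivial_iff

theorem starOf_injOn (u t0 h : ℕ) :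
    Set.InjOn (starOf u t0) {ψ | ∀ f ∈ ψ, IsFlat u h f} := fun ψ1 h1 ψ2 h2 h12 => by
  rwa [starOf_eq_image_ray, starOf_eq_image_ray, (ray_injOn u t0 h).image_eq_image_iff h1 h2]
    at h12

theorem IsSpread.subset_singleton_of_subsingleton {n t : ℕ} {ψ : Set (Set (V n))}
    (hψ : IsSpread n t ψ) (hs : ψ.Subsingleton) : ψ ⊆ {{v | v ≠ 0}} := fun f hf => by
  rw [Set.mem_singleton_iff, ← hψ.2.2, hs.eq_singleton_of_mem hf, Set.sUnion_singleton]

theorem IsSpread.eq_of_subsingleton {n t : ℕ} {ψ1 ψ2 : Set (Set (V n))}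
    (h1 : IsSpread n t ψ1) (h2 : IsSpread n t ψ2) (hs1 : ψ1.Subsingleton)
    (hs2 : ψ2.Subsingleton) (hne : ψ1.Nonempty ↔ ψ2.Nonempty) : ψ1 = ψ2 := by
  have hψ1 := Set.subset_singleton_iff_eq.mp (h1.subset_singleton_of_subsingleton hs1)
  have hψ2 := Set.subset_singleton_iff_eq.mp (h2.subset_singleton_of_subsingleton hs2)
  rcases hψ1 with rfl | rfl <;> rcases hψ2 with rfl | rfl <;> simp_all

theorem map_ker_projFirst_of_image_starOf {u t0 h : ℕ} {ψ1 ψ2 : Set (Set (V u))}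
    (h1 : IsSpread u h ψ1) (h2 : IsSpread u h ψ2) (hnt1 : ψ1.Nontrivial) (hnt2 : ψ2.Nontrivial)
    {C : V (u + t0) ≃ₗ[ZMod 2] V (u + t0)} (hC : (C '' ·) '' starOf u t0 ψ1 = starOf u t0 ψ2) :
    (ker (projFirst u t0)).map (C : V (u + t0) →ₗ[ZMod 2] V (u + t0)) = ker (projFirst u t0) :=
  punctured_injective <| by
    calc punctured ((ker (projFirst u t0)).map (C : V (u + t0) →ₗ[ZMod 2] V (u + t0)))
        = C '' ⋂₀ starOf u t0 ψ1 := by rw [h1.sInter_starOf hnt1, image_punctured]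
      _ = ⋂₀ starOf u t0 ψ2 := by rw [Set.image_sInter_of_bijective C.bijective, hC]
      _ = punctured (ker (projFirst u t0)) := h2.sInter_starOf hnt2

/-- Lemma 2: the stars `Ω_j = ψ_j × π` are isomorphic (equal after applying
some element of `GL(u+t0, 2)`) if and only if the spreads `ψ_j` are
isomorphic (equal after applying some element of `GL(u, 2)`). -/
theorem star_iso_iff_spread_iso (u t0 h : ℕ)
    (ψ1 ψ2 : Set (Set (V u)))
    (h1 : IsSpread u h ψ1) (h2 : IsSpread u h ψ2) :
    (∃ C : V (u + t0) ≃ₗ[ZMod 2] V (u + t0),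
        (fun r => ⇑C '' r) '' starOf u t0 ψ1 = starOf u t0 ψ2) ↔
    (∃ D : V u ≃ₗ[ZMod 2] V u, (fun f => ⇑D '' f) '' ψ1 = ψ2) := by
  constructor
  · rintro ⟨C, hC⟩
    have hnt : ψ1.Nontrivial ↔ ψ2.Nontrivial := by
      rw [← starOf_nontrivial_iff (t0 := t0) h1.1, ← starOf_nontrivial_iff (t0 := t0) h2.1, ← hC,
        Set.image_nontrivial (Set.image_injective.mpr C.injective)]
    by_cases hnt1 : ψ1.Nontrivial
    · obtain ⟨D, hD⟩ := exists_intertwining_of_map_ker (projFirst_surjective u t0) C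
        (map_ker_projFirst_of_image_starOf h1 h2 hnt1 (hnt.mp hnt1) hC)
      refine ⟨D, starOf_injOn u t0 h ?_ h2.1 (by rw [← image_starOf hD, hC])⟩
      rintro _ ⟨f, hf, rfl⟩
      exact (h1.1 f hf).image D
    · have hne : ψ1.Nonempty ↔ ψ2.Nonempty := by
        rw [← starOf_nonempty_iff (t0 := t0) (ψ := ψ1),
          ← starOf_nonempty_iff (t0 := t0) (ψ := ψ2), ← hC, Set.image_nonempty]
      refine ⟨LinearEquiv.refl _ _, ?_⟩
      rw [show ⇑(LinearEquiv.refl (ZMod 2) (V u)) = id from rfl]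
      simp only [Set.image_id, Set.image_id']
      exact h1.eq_of_subsingleton h2 (Set.not_nontrivial_iff.mp hnt1)
        (Set.not_nontrivial_iff.mp (hnt.not.mp hnt1)) hne
  · rintro ⟨D, rfl⟩
    obtain ⟨C, hC⟩ := exists_intertwining_fst (splitCoords u t0) D
    exact ⟨C, image_starOf hC ψ1⟩
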